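/- arXiv:1305.1684 — 4 statements merged into one kernel-verified Lean document; each statement's English description precedes it below -/
import Mathlib

section
/- Let A be an additive category, and let B ⊆ C ⊆ A be full additive subcategories. Then there is a canonical equivalence of additive categories (A // B) // (C // B) ≃ A // C, where C // B is viewed as a full subcategory of A // B. -/
/-!
If `r` implies `t`, then quotienting `C` by `r` and then by the relation that `t` induces on
`C / r` is the same as quotienting by `t` in one step: both are universal among functors out of
`C` that identify `t`-related morphisms. Since `B ⊆ C`, "the difference factors through `B`"
implies "the difference factors through `C`", and `(A // B) // (C // B)` is exactly the quotient
of `A // B` by the induced relation.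
-/

open CategoryTheory CategoryTheory.Limits

universe v u

/-- A morphism factors through an object satisfying `P`. -/
def FactorsThrough' {A : Type u} [Category.{v} A] (P : A → Prop) {X Y : A}
    (f : X ⟶ Y) : Prop :=
  ∃ (Z : A) (g : X ⟶ Z) (h : Z ⟶ Y), P Z ∧ f = g ≫ h

/-- The hom relation defining the naive quotient `A // B` of an additive category by a
full additive subcategory `B` (objects satisfying `P`). -/
def naiveQuotRel {A : Type u} [Category.{v} A] [Preadditive A] (P : A → Prop) :
    HomRel A :=
  fun {_ _} f g => FactorsThrough' P (f - g)

/-- The hom relation on `A // B` defining `(A // B) // (C // B)`, where `C // B` is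
viewed as the full subcategory of `A // B` on the objects of `C`: two morphisms of
`A // B` are identified iff they admit representatives in `A` whose difference factors
through an object of `C`. -/
def outerQuotRel {A : Type u} [Category.{v} A] [Preadditive A] (PB PC : A → Prop) :
    HomRel (CategoryTheory.Quotient (naiveQuotRel PB)) :=
  fun {X Y} f g => ∃ f₀ g₀ : X.as ⟶ Y.as,
    (Quotient.functor (naiveQuotRel PB)).map f₀ = f ∧
    (Quotient.functor (naiveQuotRel PB)).map g₀ = g ∧
    FactorsThrough' PC (f₀ - g₀)

namespace CategoryTheory.Quotient

variable {C : Type*} [Category C] (r t : HomRel C)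

def inducedRel : HomRel (Quotient r) :=
  fun {X Y} f g => ∃ f₀ g₀ : X.as ⟶ Y.as,
    (functor r).map f₀ = f ∧ (functor r).map g₀ = g ∧ t f₀ g₀

variable {r t} (hrt : ∀ ⦃X Y : C⦄ ⦃f g : X ⟶ Y⦄, r f g → t f g)

def coarsen : Quotient r ⥤ Quotient t :=
  lift r (functor t) fun _ _ _ _ h => Quotient.sound t (hrt h)

lemma coarsen_map_eq_of_inducedRel {X Y : Quotient r} {f g : X ⟶ Y}
    (h : inducedRel r t f g) : (coarsen hrt).map f = (coarsen hrt).map g := by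
  obtain ⟨f₀, g₀, rfl, rfl, h⟩ := h
  exact Quotient.sound t h

def inducedEquiv : Quotient (inducedRel r t) ≌ Quotient t :=
  Equivalence.mk
    (lift _ (coarsen hrt) fun _ _ _ _ => coarsen_map_eq_of_inducedRel hrt)
    (lift t (functor r ⋙ functor (inducedRel r t))
      fun _ _ f g h => Quotient.sound _ ⟨f, g, rfl, rfl, h⟩)
    (eqToIso (lift_unique' _ _ _ (lift_unique' r _ _ rfl)))
    (eqToIso (lift_unique' t _ _ rfl))

lemma functor_comp_functor_comp_inducedEquiv_functor :
    functor r ⋙ functor (inducedRel r t) ⋙ (inducedEquiv hrt).functor = functor t :=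
  rfl

end CategoryTheory.Quotient

lemma naiveQuotRel_mono {A : Type*} [Category A] [Preadditive A] {P Q : A → Prop}
    (hPQ : ∀ Z, P Z → Q Z) ⦃X Y : A⦄ ⦃f g : X ⟶ Y⦄ (h : naiveQuotRel P f g) :
    naiveQuotRel Q f g := by
  obtain ⟨Z, u, v, hZ, hfg⟩ := h
  exact ⟨Z, u, v, hPQ Z hZ, hfg⟩

theorem stmt4_general {A : Type u} [Category.{v} A] [Preadditive A]
    (PB PC : A → Prop) (hBC : ∀ Z, PB Z → PC Z) :
    ∃ e : CategoryTheory.Quotient (outerQuotRel PB PC) ≌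
        CategoryTheory.Quotient (naiveQuotRel PC),
      Nonempty (Quotient.functor (naiveQuotRel PB) ⋙
          Quotient.functor (outerQuotRel PB PC) ⋙ e.functor ≅
        Quotient.functor (naiveQuotRel PC)) :=
  ⟨Quotient.inducedEquiv (r := naiveQuotRel PB) (naiveQuotRel_mono hBC),
    ⟨eqToIso (Quotient.functor_comp_functor_comp_inducedEquiv_functor _)⟩⟩

/-- Let `A` be an additive category and `B ⊆ C ⊆ A` full additive
subcategories.  Then there is a canonical equivalence `(A // B) // (C // B) ≃ A // C`,
canonical in that it is compatible with the quotient functors. -/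
theorem stmt4 {A : Type u} [Category.{v} A] [Preadditive A] [HasBinaryBiproducts A]
    (PB PC : A → Prop) (hBC : ∀ Z, PB Z → PC Z)
    (hneB : ∃ Z, PB Z) (hbiB : ∀ Z W : A, PB Z → PB W → PB (Z ⊞ W))
    (hbiC : ∀ Z W : A, PC Z → PC W → PC (Z ⊞ W)) :
    ∃ e : CategoryTheory.Quotient (outerQuotRel PB PC) ≌
        CategoryTheory.Quotient (naiveQuotRel PC),
      Nonempty (Quotient.functor (naiveQuotRel PB) ⋙
          Quotient.functor (outerQuotRel PB PC) ⋙ e.functor ≅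
        Quotient.functor (naiveQuotRel PC)) :=
  stmt4_general PB PC hBC
end

section
/- Let A be an abelian category with a recollement-type situation: a Serre subcategory A_Γ with exact quotient functor Π : A → A/A_Γ admitting a left adjoint Π^L on derived categories. Suppose T, T' are objects of A such that the adjunction triangle Π^L Π(T) → T → i i^L(T) consists of objects of A (i.e. is a short exact sequence in A), and suppose Ext^1_A(i i^L(T), T') = 0. Then the map Hom_A(T, T') → Hom_{A/A_Γ}(Π T, Π T') induced by Π is surjective, with kernel the set of morphisms T → T' factoring through i i^L(T). -/
/-!
Since the triangle is a short exact sequence `0 → TL → T → K → 0`, applying `Hom_A(-, T')` gives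
the exact sequence `0 → Hom(K, T') → Hom(T, T') → Hom(TL, T') → Ext¹(K, T')`. The vanishing of
`Ext¹(K, T')` makes restriction along `TL → T` surjective, and its kernel consists of the morphisms
factoring through `K`. Composing with the adjunction bijection `Hom_A(TL, T') ≃ Hom_Q(ΠT, ΠT')`
gives the claim.
-/

open CategoryTheory CategoryTheory.Limits

namespace CategoryTheory.ShortComplex.ShortExact

variable {C : Type*} [Category C] [Abelian C] {S : ShortComplex C} {Y : C}

lemma exists_f_comp_eq_of_subsingleton_ext [HasExt C] (hS : S.ShortExact)
    [Subsingleton (Abelian.Ext S.X₃ Y 1)] (a : S.X₁ ⟶ Y) : ∃ b : S.X₂ ⟶ Y, S.f ≫ b = a := by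
  obtain ⟨x, hx⟩ := Abelian.Ext.contravariant_sequence_exact₁ hS Y (Abelian.Ext.mk₀ a) rfl
    (Subsingleton.elim _ _)
  obtain ⟨b, rfl⟩ := (Abelian.Ext.mk₀_bijective S.X₂ Y).2 x
  refine ⟨b, (Abelian.Ext.mk₀_bijective S.X₁ Y).1 ?_⟩
  rwa [← Abelian.Ext.mk₀_comp_mk₀]

lemma f_comp_eq_zero_iff (hS : S.ShortExact) (b : S.X₂ ⟶ Y) :
    S.f ≫ b = 0 ↔ ∃ h : S.X₃ ⟶ Y, b = S.g ≫ h := by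
  have := hS.epi_g
  constructor
  · intro hb
    exact ⟨hS.exact.desc b hb, (hS.exact.g_desc b hb).symm⟩
  · rintro ⟨h, rfl⟩
    rw [S.zero_assoc, zero_comp]

end CategoryTheory.ShortComplex.ShortExact

/-- Here `TL = Π^L Π(T)`, `K = i i^L(T)`, and `e` is the adjunction bijection. -/
theorem stmt5_general {A : Type u₁} [Category.{v₁} A] [Abelian A] [HasExt.{w} A]
    {Q : Type u₂} [Category.{v₂} Q] [Abelian Q]
    (Pi : A ⥤ Q)
    (T T' TL K : A) (ι : TL ⟶ T) (π : T ⟶ K) (w : ι ≫ π = 0)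
    (hses : (ShortComplex.mk ι π w).ShortExact)
    (e : (TL ⟶ T') ≃+ (Pi.obj T ⟶ Pi.obj T'))
    (he : ∀ f : T ⟶ T', e (ι ≫ f) = Pi.map f)
    (hext : Subsingleton (Abelian.Ext K T' 1)) :
    Function.Surjective (fun f : T ⟶ T' => Pi.map f) ∧
      ∀ f : T ⟶ T', Pi.map f = 0 ↔ ∃ h : K ⟶ T', f = π ≫ h := by
  refine ⟨fun g => ?_, fun f => ?_⟩
  · obtain ⟨f, hf⟩ := hses.exists_f_comp_eq_of_subsingleton_ext (e.symm g)
    exact ⟨f, (he f).symm.trans ((congrArg e hf).trans (e.apply_symm_apply g))⟩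
  · rw [← he, e.map_eq_zero_iff]
    exact hses.f_comp_eq_zero_iff f

/-- Let `A` be abelian, `Π : A ⥤ Q` an exact (Serre) quotient functor,
and suppose the adjunction triangle `Π^L Π(T) → T → i i^L(T)` is a short exact sequence
in `A`: we write `TL = Π^L Π(T)`, `K = i i^L(T)`, `ι : TL ⟶ T`, `π : T ⟶ K`, so that
`Π K = 0` and the adjunction gives a natural additive bijection
`Hom_A(TL, T') ≃ Hom_Q(Π T, Π T')` sending `ι ≫ f` to `Pi.map f`.  If
`Ext¹_A(K, T') = 0`, then `Hom_A(T,T') → Hom_Q(ΠT, ΠT')` is surjective, and its kernel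
is exactly the set of morphisms `T ⟶ T'` factoring through `K = i i^L(T)`. -/
theorem stmt5 {A : Type u₁} [Category.{v₁} A] [Abelian A] [HasExt.{w} A]
    {Q : Type u₂} [Category.{v₂} Q] [Abelian Q]
    (Pi : A ⥤ Q) [Pi.Additive] [PreservesFiniteLimits Pi] [PreservesFiniteColimits Pi]
    (T T' TL K : A) (ι : TL ⟶ T) (π : T ⟶ K) (w : ι ≫ π = 0)
    (hses : (ShortComplex.mk ι π w).ShortExact)
    (hK : IsZero (Pi.obj K))
    (e : (TL ⟶ T') ≃+ (Pi.obj T ⟶ Pi.obj T'))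
    (he : ∀ f : T ⟶ T', e (ι ≫ f) = Pi.map f)
    (hext : Subsingleton (Abelian.Ext K T' 1)) :
    Function.Surjective (fun f : T ⟶ T' => Pi.map f) ∧
      ∀ f : T ⟶ T', Pi.map f = 0 ↔ ∃ h : K ⟶ T', f = π ≫ h :=
  stmt5_general Pi T T' TL K ι π w hses e he hext
end

section
/- Let C be a k-linear abelian category with finite-length objects, equipped with a collection of 'standard' objects Δ_γ and 'costandard' objects ∇_γ indexed by a poset Ω, satisfying Ext^k(Δ_γ, ∇_ξ) = 0 for all k > 0 and all γ, ξ, and Hom(Δ_γ, ∇_ξ) = 0 for γ ≠ ξ. If X admits a finite filtration with subquotients among the Δ_γ (with shifts), then for each γ, Hom(X, ∇_γ) is a free module over the ring End(∇_γ), provided Hom(Δ_γ, ∇_γ) is a free End(∇_γ)-module. -/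
open CategoryTheory CategoryTheory.Limits

universe w v u

/-- In a preadditive category, `Hom(X, N)` is a module over the endomorphism ring
`End N`, acting by post-composition. -/
instance homEndModule {C : Type u} [Category.{v} C] [Preadditive C] (X N : C) :
    Module (End N) (X ⟶ N) where
  smul g f := f ≫ g
  one_smul f := Category.comp_id f
  mul_smul g h f := by
    show f ≫ (g * h) = (f ≫ h) ≫ g
    rw [End.mul_def, Category.assoc]
  smul_zero g := Limits.zero_comp
  smul_add g f f' := Preadditive.add_comp _ _ _ _ _ _
  add_smul g g' f := Preadditive.comp_add _ _ _ _ _ _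
  zero_smul f := Limits.comp_zero

/-- `X` admits a finite filtration with subquotients satisfying `S`. -/
inductive FiltBy {C : Type u} [Category.{v} C] [Abelian C] (S : C → Prop) : C → Prop
  | of_isZero {X : C} (h : IsZero X) : FiltBy S X
  | ext {X₁ X₂ X₃ : C} (f : X₁ ⟶ X₂) (g : X₂ ⟶ X₃) (w : f ≫ g = 0)
      (hse : (ShortComplex.mk f g w).ShortExact)
      (h1 : FiltBy S X₁) (h3 : S X₃) : FiltBy S X₂

/-! Apply `Hom(-, ∇_γ)` to a step `0 → X₁ → X₂ → Dl ξ → 0` of the filtration. Since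
`Ext¹(Dl ξ, ∇_γ) = 0` the resulting sequence `0 → Hom(Dl ξ, ∇_γ) → Hom(X₂, ∇_γ) → Hom(X₁, ∇_γ) → 0`
is exact, and by induction `Hom(X₁, ∇_γ)` is free, hence projective, so the sequence splits and
`Hom(X₂, ∇_γ)` is free. The last term is free by hypothesis if `ξ = γ` and zero otherwise. -/

theorem Module.Free.of_exact {R M N P : Type*} [Ring R] [AddCommGroup M] [AddCommGroup N]
    [AddCommGroup P] [Module R M] [Module R N] [Module R P] [Module.Free R M] [Module.Free R P]
    {f : M →ₗ[R] N} {g : N →ₗ[R] P} (hfg : Function.Exact f g) (hf : Function.Injective f)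
    (hg : Function.Surjective g) : Module.Free R N := by
  obtain ⟨l, hl⟩ := Module.projective_lifting_property g LinearMap.id hg
  exact Module.Free.of_equiv (hfg.splitSurjectiveEquiv hf ⟨l, hl⟩).1.symm

namespace CategoryTheory

variable {C : Type u} [Category.{v} C]

section Preadditive

variable [Preadditive C]

def precompEndLinear (N : C) {X Y : C} (f : X ⟶ Y) : (Y ⟶ N) →ₗ[End N] (X ⟶ N) where
  toFun h := f ≫ h
  map_add' _ _ := Preadditive.comp_add _ _ _ _ _ _
  map_smul' _ _ := (Category.assoc _ _ _).symm

def Iso.precompEndLinearEquiv {X Y : C} (e : X ≅ Y) (N : C) : (Y ⟶ N) ≃ₗ[End N] (X ⟶ N) where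
  __ := precompEndLinear N e.hom
  invFun h := e.inv ≫ h
  left_inv h := e.inv_hom_id_assoc h
  right_inv h := e.hom_inv_id_assoc h

end Preadditive

variable [Abelian C]

theorem ShortComplex.ShortExact.exact_precompEndLinear {S : ShortComplex C} (hS : S.ShortExact)
    (N : C) : Function.Exact (precompEndLinear N S.g) (precompEndLinear N S.f) := by
  intro h
  constructor
  · intro hfh
    obtain ⟨a, ha⟩ := CokernelCofork.IsColimit.desc' hS.gIsCokernel h hfh
    exact ⟨a, ha⟩
  · rintro ⟨a, rfl⟩
    exact (S.zero_assoc a).trans zero_comp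

theorem ShortComplex.ShortExact.injective_precompEndLinear {S : ShortComplex C}
    (hS : S.ShortExact) (N : C) : Function.Injective (precompEndLinear N S.g) :=
  have := hS.epi_g
  fun _ _ h => (cancel_epi S.g).1 h

open Abelian

variable [HasExt.{w} C]

theorem Abelian.Ext.subsingleton_of_iso {X Y : C} (e : X ≅ Y) (Z : C) (n : ℕ)
    [Subsingleton (Ext.{w} Y Z n)] : Subsingleton (Ext.{w} X Z n) :=
  Function.LeftInverse.injective (g := fun x => (Ext.mk₀ e.hom).comp x (zero_add n))
    (f := fun x => (Ext.mk₀ e.inv).comp x (zero_add n))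
    (fun x => by simp [Ext.mk₀_comp_mk₀_assoc]) |>.subsingleton

theorem ShortComplex.ShortExact.exists_comp_eq_of_subsingleton_ext {S : ShortComplex C}
    (hS : S.ShortExact) {N : C} [Subsingleton (Ext.{w} S.X₃ N 1)] (u : S.X₁ ⟶ N) :
    ∃ h : S.X₂ ⟶ N, S.f ≫ h = u := by
  obtain ⟨x, hx⟩ := Ext.contravariant_sequence_exact₁ hS N (Ext.mk₀ u) (add_zero 1)
    (Subsingleton.elim _ _)
  obtain ⟨h, rfl⟩ := (Ext.mk₀_bijective _ _).2 x
  rw [Ext.mk₀_comp_mk₀] at hx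
  exact ⟨h, (Ext.mk₀_bijective _ _).1 hx⟩

theorem ShortComplex.ShortExact.free_hom {S : ShortComplex C} (hS : S.ShortExact) (N : C)
    [Subsingleton (Ext.{w} S.X₃ N 1)] [Module.Free (End N) (S.X₁ ⟶ N)]
    [Module.Free (End N) (S.X₃ ⟶ N)] : Module.Free (End N) (S.X₂ ⟶ N) :=
  Module.Free.of_exact (hS.exact_precompEndLinear N) (hS.injective_precompEndLinear N)
    hS.exists_comp_eq_of_subsingleton_ext.{w}

end CategoryTheory

theorem stmt6_general {C : Type u} [Category.{v} C] [Abelian C] [HasExt.{w} C]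
    {Ω : Type} (Dl Nab : Ω → C)
    (hext : ∀ (γ ξ : Ω) (n : ℕ), 0 < n → Subsingleton (Abelian.Ext (Dl γ) (Nab ξ) n))
    (hhom : ∀ γ ξ : Ω, γ ≠ ξ → ∀ f : Dl γ ⟶ Nab ξ, f = 0)
    (γ : Ω) (hfree : Module.Free (End (Nab γ)) (Dl γ ⟶ Nab γ))
    (X : C) (hX : FiltBy (fun Y => ∃ ξ : Ω, Nonempty (Y ≅ Dl ξ)) X) :
    Module.Free (End (Nab γ)) (X ⟶ Nab γ) := by
  induction hX with
  | of_isZero hzero =>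
    have : Subsingleton (_ ⟶ Nab γ) := ⟨hzero.eq_of_src⟩
    infer_instance
  | ext _ _ _ hse _ hquot ih =>
    obtain ⟨ξ, ⟨e⟩⟩ := hquot
    have : Subsingleton (Abelian.Ext _ (Nab γ) 1) :=
      have := hext ξ γ 1 one_pos
      Abelian.Ext.subsingleton_of_iso e _ 1
    have hfreeξ : Module.Free (End (Nab γ)) (Dl ξ ⟶ Nab γ) := by
      by_cases hξ : ξ = γ
      · exact hξ ▸ hfree
      · have : Subsingleton (Dl ξ ⟶ Nab γ) :=
          ⟨fun a b => (hhom ξ γ hξ a).trans (hhom ξ γ hξ b).symm⟩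
        infer_instance
    have := Module.Free.of_equiv (e.precompEndLinearEquiv (Nab γ))
    exact hse.free_hom (Nab γ)

/-- Let `C` be a `k`-linear abelian category equipped with families of
standard objects `Dl γ` and costandard objects `∇ γ` indexed by `Ω`, satisfying
`Ext^n(Dl γ, ∇ ξ) = 0` for all `n > 0` and all `γ, ξ`, and `Hom(Dl γ, ∇ ξ) = 0` for
`γ ≠ ξ`.  If `X` admits a finite filtration with subquotients among the `Dl γ`, then for
each `γ`, `Hom(X, ∇ γ)` is a free `End(∇ γ)`-module, provided `Hom(Dl γ, ∇ γ)` is a free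
`End(∇ γ)`-module. -/
theorem stmt6 {C : Type u} [Category.{v} C] [Abelian C] [HasExt.{w} C]
    {k : Type} [Field k] [Linear k C]
    {Ω : Type} (Dl Nab : Ω → C)
    (hext : ∀ (γ ξ : Ω) (n : ℕ), 0 < n → Subsingleton (Abelian.Ext (Dl γ) (Nab ξ) n))
    (hhom : ∀ γ ξ : Ω, γ ≠ ξ → ∀ f : Dl γ ⟶ Nab ξ, f = 0)
    (γ : Ω) (hfree : Module.Free (End (Nab γ)) (Dl γ ⟶ Nab γ))
    (X : C) (hX : FiltBy (fun Y => ∃ ξ : Ω, Nonempty (Y ≅ Dl ξ)) X) :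
    Module.Free (End (Nab γ)) (X ⟶ Nab γ) :=
  stmt6_general Dl Nab hext hhom γ hfree X hX
end

section
/- Let D be a triangulated category with a recollement (D_Z, D, D_U) given by functors i_* : D_Z → D, j^* : D → D_U with the standard adjoints and triangles. Let E, F ∈ D be objects such that Hom^1(i^* E, i^! F) = 0. Then the map j^* : Hom_D(E, F) → Hom_{D_U}(j^* E, j^* F) is surjective, and its kernel consists exactly of the morphisms f : E → F that factor as E → i_* i^* E → i_* i^! F → F. -/
open CategoryTheory CategoryTheory.Limits CategoryTheory.Pretriangulated

universe v₁ v₂ v₃ u₁ u₂ u₃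

/-!
Apply `Hom(E, -)` to the triangle `i_* i^! F → F → j_* j^* F →`. Since
`Hom(E, j_* j^* F) = Hom(j^* E, j^* F)` and `Hom(E, (i_* i^! F)[1]) = Hom¹(i^* E, i^! F) = 0`,
every map `j^* E → j^* F` comes from some `f : E → F`. If `j^* f = 0`, then `f` lifts to
`h : E → i_* i^! F`; and `h` kills `j_! j^* E`, because `Hom(j_! X, i_* Z) = Hom(X, j^* i_* Z) = 0`,
so by the triangle `j_! j^* E → E → i_* i^* E →` it factors through `i_* i^* E`.
-/

namespace CategoryTheory.Adjunction

variable {C D : Type*} [Category C] [Category D] [HasZeroMorphisms C] [HasZeroMorphisms D]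
  {L : C ⥤ D} {R : D ⥤ C}

lemma eq_zero_of_forall_left_eq_zero (adj : L ⊣ R) {X : C} {Y : D}
    (h : ∀ φ : L.obj X ⟶ Y, φ = 0) (ψ : X ⟶ R.obj Y) : ψ = 0 :=
  (adj.homEquiv X Y).symm.injective ((h _).trans (h _).symm)

lemma eq_zero_of_forall_right_eq_zero (adj : L ⊣ R) {X : C} {Y : D}
    (h : ∀ φ : X ⟶ R.obj Y, φ = 0) (ψ : L.obj X ⟶ Y) : ψ = 0 :=
  (adj.homEquiv X Y).injective ((h _).trans (h _).symm)

lemma eq_zero_of_forall_left_shift_eq_zero {A : Type*} [AddMonoid A] [HasShift C A]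
    [HasShift D A] [R.CommShift A] (adj : L ⊣ R) {X : C} {Y : D} (n : A)
    (h : ∀ φ : L.obj X ⟶ Y⟦n⟧, φ = 0) (ψ : X ⟶ (R.obj Y)⟦n⟧) : ψ = 0 := by
  have hψ : ψ ≫ ((R.commShiftIso n).inv.app Y) = 0 :=
    adj.eq_zero_of_forall_left_eq_zero h _
  rwa [← zero_comp, cancel_mono] at hψ

lemma comp_unit_app_eq_zero_of_map_eq_zero (adj : L ⊣ R) {X Y : C} {f : X ⟶ Y}
    (hf : L.map f = 0) : f ≫ adj.unit.app Y = 0 := by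
  have := adj.isRightAdjoint
  rw [← adj.unit_naturality, hf, R.map_zero, comp_zero]

end CategoryTheory.Adjunction

section AdjunctionTriangles

variable {C U : Type*} [Category C] [HasZeroObject C] [Preadditive C] [HasShift C ℤ]
  [∀ n : ℤ, (shiftFunctor C n).Additive] [Pretriangulated C] [Category U]
  {G : C ⥤ U} {H : U ⥤ C}

theorem map_surjective_of_unit_distinguished (adj : G ⊣ H) {A E F : C} (a : A ⟶ F)
    (δ : H.obj (G.obj F) ⟶ A⟦(1 : ℤ)⟧) (hT : Triangle.mk a (adj.unit.app F) δ ∈ distTriang C)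
    (hE : ∀ ψ : E ⟶ A⟦(1 : ℤ)⟧, ψ = 0) :
    Function.Surjective (fun f : E ⟶ F => G.map f) := by
  intro u
  obtain ⟨f, hf⟩ := Triangle.coyoneda_exact₃ _ hT (adj.homEquiv E _ u) (hE _)
  refine ⟨f, (adj.homEquiv E _).injective ?_⟩
  rw [hf, adj.homEquiv_apply]
  exact adj.unit_naturality f

theorem map_eq_zero_iff_exists_factorization [HasZeroMorphisms U] {L : U ⥤ C}
    (adjL : L ⊣ G) (adjH : G ⊣ H) {A B E F : C} (a : A ⟶ F) (b : E ⟶ B)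
    (δE : B ⟶ (L.obj (G.obj E))⟦(1 : ℤ)⟧)
    (hTE : Triangle.mk (adjL.counit.app E) b δE ∈ distTriang C)
    (δF : H.obj (G.obj F) ⟶ A⟦(1 : ℤ)⟧)
    (hTF : Triangle.mk a (adjH.unit.app F) δF ∈ distTriang C)
    (hA : IsZero (G.obj A)) (f : E ⟶ F) :
    G.map f = 0 ↔ ∃ g : B ⟶ A, f = b ≫ g ≫ a := by
  constructor
  · intro hf
    obtain ⟨h, rfl⟩ := Triangle.coyoneda_exact₂ _ hTF f
      (adjH.comp_unit_app_eq_zero_of_map_eq_zero hf)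
    obtain ⟨g, rfl⟩ := Triangle.yoneda_exact₂ _ hTE h
      (adjL.eq_zero_of_forall_right_eq_zero (fun _ => hA.eq_of_tgt _ _) _)
    exact ⟨g, Category.assoc _ _ _⟩
  · rintro ⟨g, rfl⟩
    rw [G.map_comp, G.map_comp, hA.eq_of_src (G.map a) 0, comp_zero, comp_zero]

end AdjunctionTriangles

/-- Let `(D_Z, D, D_U)` be a recollement of triangulated categories,
with `i_* : D_Z ⥤ D` fully faithful, adjoints `i^* ⊣ i_* ⊣ i^!`, `j_! ⊣ j^* ⊣ j_*`,
`j^* i_* = 0`, and the two adjunction distinguished triangles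
`j_! j^* E → E → i_* i^* E → (j_! j^* E)[1]` and
`i_* i^! F → F → j_* j^* F → (i_* i^! F)[1]`.
If `Hom¹(i^* E, i^! F) = 0` then `j^* : Hom(E,F) → Hom(j^*E, j^*F)` is surjective, and
its kernel consists exactly of the morphisms `f : E ⟶ F` factoring as
`E → i_* i^* E → i_* i^! F → F` (through the unit and counit). -/
theorem stmt12
    {DZ : Type u₁} [Category.{v₁} DZ] [HasZeroObject DZ] [Preadditive DZ]
    [HasShift DZ ℤ] [∀ n : ℤ, (shiftFunctor DZ n).Additive] [Pretriangulated DZ]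
    {D : Type u₂} [Category.{v₂} D] [HasZeroObject D] [Preadditive D]
    [HasShift D ℤ] [∀ n : ℤ, (shiftFunctor D n).Additive] [Pretriangulated D]
    {DU : Type u₃} [Category.{v₃} DU] [HasZeroObject DU] [Preadditive DU]
    [HasShift DU ℤ] [∀ n : ℤ, (shiftFunctor DU n).Additive] [Pretriangulated DU]
    (iIncl : DZ ⥤ D) (iStar iShriek : D ⥤ DZ)
    (jStar : D ⥤ DU) (jLower jUpper : DU ⥤ D)
    [iIncl.Full] [iIncl.Faithful]
    [iIncl.CommShift ℤ] [iIncl.IsTriangulated]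
    [iStar.CommShift ℤ] [iStar.IsTriangulated]
    [iShriek.CommShift ℤ] [iShriek.IsTriangulated]
    [jStar.CommShift ℤ] [jStar.IsTriangulated]
    [jLower.CommShift ℤ] [jLower.IsTriangulated]
    [jUpper.CommShift ℤ] [jUpper.IsTriangulated]
    (adjStar : iStar ⊣ iIncl) (adjShriek : iIncl ⊣ iShriek)
    (adjLower : jLower ⊣ jStar) (adjUpper : jStar ⊣ jUpper)
    (hji : ∀ Z : DZ, IsZero (jStar.obj (iIncl.obj Z)))
    (E F : D)
    (δE : iIncl.obj (iStar.obj E) ⟶ (jLower.obj (jStar.obj E))⟦(1 : ℤ)⟧)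
    (htriE : Triangle.mk (adjLower.counit.app E) (adjStar.unit.app E) δE ∈
      distTriang D)
    (δF : jUpper.obj (jStar.obj F) ⟶ (iIncl.obj (iShriek.obj F))⟦(1 : ℤ)⟧)
    (htriF : Triangle.mk (adjShriek.counit.app F) (adjUpper.unit.app F) δF ∈
      distTriang D)
    (hvan : ∀ φ : iStar.obj E ⟶ (iShriek.obj F)⟦(1 : ℤ)⟧, φ = 0) :
    Function.Surjective (fun f : E ⟶ F => jStar.map f) ∧
      ∀ f : E ⟶ F, jStar.map f = 0 ↔
        ∃ g : iIncl.obj (iStar.obj E) ⟶ iIncl.obj (iShriek.obj F),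
          f = adjStar.unit.app E ≫ g ≫ adjShriek.counit.app F :=
  ⟨map_surjective_of_unit_distinguished adjUpper _ δF htriF
      (adjStar.eq_zero_of_forall_left_shift_eq_zero 1 hvan),
    map_eq_zero_iff_exists_factorization adjLower adjUpper _ _ δE htriE δF htriF (hji _)⟩
end
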